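/- Let W be a nonnegative-integer-valued random variable with E[W] = α ∈ (0,∞), and suppose that for every bounded h : ℕ → ℝ, |E[α·h(W+1) - W·h(W)]| ≤ c · sup_i |h(i+1) - h(i)|. Then the total variation distance between the law of W and the Poisson(α) distribution is at most c · min(1, 1/α). -/

import Mathlib

open MeasureTheory ProbabilityTheory

/-- The Poisson pmf with real parameter `r`. -/
noncomputable def poissonPmf (r : ℝ) (n : ℕ) : ℝ := Real.exp (-r) * r ^ n / n.factorial

/-!
Write `π` for the Poisson(α) law, `p` for its pmf, `F n = π [0, n]`, `T n = π (n, ∞)`,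
`a n = π (A ∩ [0, n])` and `b n = π (A ∩ (n, ∞))` (`lowerMass α A n` and `upperMass α A n`;
`F` and `T` are the case `A = univ`). The solution `g` of the Stein equation
`α g (n + 1) - n g n = 1_A n - π A` with `g 0 = 0` is
`α g (n + 1) = a n · T n / p n - b n · F n / p n`.
Since `(n + 1) p (n + 1) = α p n`, the ratio `T n / p n` decreases and `F n / p n` increases, so
`α (g (n + 1) - g n) ≤ 1_A n · (T n + p n · F (n - 1) / p (n - 1)) ≤ min α 1`. As `g` changes sign
when `A` is replaced by `Aᶜ`, `|Δg| ≤ min 1 (1 / α)`, and for `h = g` the integrand of the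
hypothesis is `1_A (W) - π A`.
-/

open Finset

section PoissonPmf

variable {α : ℝ}

lemma poissonPmf_nonneg (hα : 0 ≤ α) (n : ℕ) : 0 ≤ poissonPmf α n := by
  unfold poissonPmf
  positivity

lemma poissonPmf_pos (hα : 0 < α) (n : ℕ) : 0 < poissonPmf α n := by
  unfold poissonPmf
  positivity

lemma succ_mul_poissonPmf_succ (α : ℝ) (n : ℕ) :
    ((n : ℝ) + 1) * poissonPmf α (n + 1) = α * poissonPmf α n := by
  unfold poissonPmf
  rw [Nat.factorial_succ]
  push_cast
  field_simp
  ring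

lemma hasSum_poissonPmf (hα : 0 ≤ α) : HasSum (poissonPmf α) 1 :=
  hasSum_one_poissonMeasure ⟨α, hα⟩

lemma summable_poissonPmf (hα : 0 ≤ α) : Summable (poissonPmf α) :=
  (hasSum_poissonPmf hα).summable

end PoissonPmf

namespace PoissonStein

noncomputable def mass (α : ℝ) (A : Set ℕ) : ℝ := ∑' n, A.indicator (poissonPmf α) n

noncomputable def lowerMass (α : ℝ) (A : Set ℕ) (n : ℕ) : ℝ :=
  ∑ k ∈ range (n + 1), A.indicator (poissonPmf α) k

noncomputable def upperMass (α : ℝ) (A : Set ℕ) (n : ℕ) : ℝ :=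
  ∑' k, A.indicator (poissonPmf α) (k + (n + 1))

variable {α : ℝ} (A : Set ℕ)

lemma indicator_poissonPmf_nonneg (hα : 0 ≤ α) (n : ℕ) : 0 ≤ A.indicator (poissonPmf α) n :=
  Set.indicator_nonneg (fun k _ ↦ poissonPmf_nonneg hα k) n

lemma mass_univ (hα : 0 ≤ α) : mass α Set.univ = 1 := by
  simpa [mass] using (hasSum_poissonPmf hα).tsum_eq

lemma mass_add_mass_compl (hα : 0 ≤ α) : mass α A + mass α Aᶜ = 1 := by
  have hs := summable_poissonPmf hα
  rw [mass, mass, ← (hs.indicator A).tsum_add (hs.indicator Aᶜ)]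
  simp_rw [Set.indicator_self_add_compl_apply]
  exact (hasSum_poissonPmf hα).tsum_eq

lemma lowerMass_add_upperMass (hα : 0 ≤ α) (n : ℕ) :
    lowerMass α A n + upperMass α A n = mass α A :=
  Summable.sum_add_tsum_nat_add (n + 1) ((summable_poissonPmf hα).indicator A)

lemma lowerMass_nonneg (hα : 0 ≤ α) (n : ℕ) : 0 ≤ lowerMass α A n :=
  sum_nonneg fun k _ ↦ indicator_poissonPmf_nonneg A hα k

lemma upperMass_nonneg (hα : 0 ≤ α) (n : ℕ) : 0 ≤ upperMass α A n :=
  tsum_nonneg fun _ ↦ indicator_poissonPmf_nonneg A hα _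

lemma indicator_poissonPmf_le (hα : 0 ≤ α) (n : ℕ) :
    A.indicator (poissonPmf α) n ≤ poissonPmf α n :=
  Set.indicator_le_self' (fun k _ ↦ poissonPmf_nonneg hα k) n

lemma indicator_poissonPmf_eq_mul (n : ℕ) :
    A.indicator (poissonPmf α) n = A.indicator 1 n * poissonPmf α n := by
  by_cases h : n ∈ A <;> simp [h]

lemma lowerMass_le_univ (hα : 0 ≤ α) (n : ℕ) : lowerMass α A n ≤ lowerMass α Set.univ n := by
  simp only [lowerMass, Set.indicator_univ]
  exact sum_le_sum fun k _ ↦ indicator_poissonPmf_le A hα k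

lemma upperMass_le_univ (hα : 0 ≤ α) (n : ℕ) : upperMass α A n ≤ upperMass α Set.univ n := by
  have hs := summable_poissonPmf hα
  simp only [upperMass, Set.indicator_univ]
  exact Summable.tsum_le_tsum (fun k ↦ indicator_poissonPmf_le A hα _)
    ((hs.indicator A).comp_injective (add_left_injective _))
    (hs.comp_injective (add_left_injective _))

lemma lowerMass_succ (n : ℕ) :
    lowerMass α A (n + 1) = lowerMass α A n + A.indicator (poissonPmf α) (n + 1) :=
  sum_range_succ _ _

lemma upperMass_eq_add_upperMass_succ (hα : 0 ≤ α) (n : ℕ) :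
    upperMass α A n = A.indicator (poissonPmf α) (n + 1) + upperMass α A (n + 1) := by
  linarith [lowerMass_add_upperMass A hα n, lowerMass_add_upperMass A hα (n + 1),
    lowerMass_succ (α := α) A n]

lemma lowerMass_univ_add_upperMass_univ (hα : 0 ≤ α) (n : ℕ) :
    lowerMass α Set.univ n + upperMass α Set.univ n = 1 := by
  rw [lowerMass_add_upperMass _ hα, mass_univ hα]

lemma add_two_mul_upperMass_univ_succ_le (hα : 0 ≤ α) (n : ℕ) :
    ((n : ℝ) + 2) * upperMass α Set.univ (n + 1) ≤ α * upperMass α Set.univ n := by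
  have hs := summable_poissonPmf hα
  have hshift : ∀ k : ℕ, α * poissonPmf α (k + (n + 1)) =
      ((k : ℝ) + n + 2) * poissonPmf α (k + (n + 1 + 1)) := fun k ↦ by
    rw [← succ_mul_poissonPmf_succ]
    push_cast
    ring_nf
  simp only [upperMass, Set.indicator_univ, ← tsum_mul_left, hshift]
  refine Summable.tsum_le_tsum (fun k ↦ ?_)
    ((hs.comp_injective (add_left_injective _)).mul_left _) ?_
  · have := poissonPmf_nonneg hα (k + (n + 1 + 1))
    nlinarith [(k.cast_nonneg : (0 : ℝ) ≤ k)]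
  · simp only [← hshift]
    exact (hs.comp_injective (add_left_injective _)).mul_left _

lemma mul_lowerMass_univ_le (hα : 0 ≤ α) (n : ℕ) :
    α * lowerMass α Set.univ n ≤ ((n : ℝ) + 1) * lowerMass α Set.univ (n + 1) := by
  simp only [lowerMass, Set.indicator_univ, mul_sum, ← succ_mul_poissonPmf_succ]
  rw [sum_range_succ' _ (n + 1)]
  calc ∑ k ∈ range (n + 1), ((k : ℝ) + 1) * poissonPmf α (k + 1)
      ≤ ∑ k ∈ range (n + 1), ((n : ℝ) + 1) * poissonPmf α (k + 1) := by
        refine sum_le_sum fun k hk ↦ mul_le_mul_of_nonneg_right ?_ (poissonPmf_nonneg hα _)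
        have : k ≤ n := Nat.lt_succ_iff.mp (mem_range.mp hk)
        exact_mod_cast Nat.succ_le_succ this
    _ ≤ _ := le_add_of_nonneg_right (mul_nonneg (by positivity) (poissonPmf_nonneg hα 0))

lemma antitone_upperMass_univ_div (hα : 0 < α) :
    Antitone fun n ↦ upperMass α Set.univ n / poissonPmf α n := by
  refine antitone_nat_of_succ_le fun n ↦ ?_
  rw [div_le_div_iff₀ (poissonPmf_pos hα _) (poissonPmf_pos hα _)]
  have hT := upperMass_nonneg Set.univ hα.le (n + 1)
  have hp := poissonPmf_nonneg hα.le n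
  refine le_of_mul_le_mul_left ?_ (by positivity : (0 : ℝ) < n + 1)
  calc ((n : ℝ) + 1) * (upperMass α Set.univ (n + 1) * poissonPmf α n)
      ≤ ((n : ℝ) + 2) * upperMass α Set.univ (n + 1) * poissonPmf α n := by nlinarith
    _ ≤ α * upperMass α Set.univ n * poissonPmf α n :=
      mul_le_mul_of_nonneg_right (add_two_mul_upperMass_univ_succ_le hα.le n) hp
    _ = ((n : ℝ) + 1) * (upperMass α Set.univ n * poissonPmf α (n + 1)) := by
      rw [mul_left_comm, succ_mul_poissonPmf_succ]
      ring

lemma monotone_lowerMass_univ_div (hα : 0 < α) :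
    Monotone fun n ↦ lowerMass α Set.univ n / poissonPmf α n := by
  refine monotone_nat_of_le_succ fun n ↦ ?_
  rw [div_le_div_iff₀ (poissonPmf_pos hα _) (poissonPmf_pos hα _)]
  refine le_of_mul_le_mul_left ?_ (by positivity : (0 : ℝ) < n + 1)
  calc ((n : ℝ) + 1) * (lowerMass α Set.univ n * poissonPmf α (n + 1))
      = α * lowerMass α Set.univ n * poissonPmf α n := by
        rw [mul_left_comm, succ_mul_poissonPmf_succ]
        ring
    _ ≤ ((n : ℝ) + 1) * lowerMass α Set.univ (n + 1) * poissonPmf α n :=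
      mul_le_mul_of_nonneg_right (mul_lowerMass_univ_le hα.le n) (poissonPmf_nonneg hα.le n)
    _ = _ := mul_assoc _ _ _

lemma upperMass_univ_zero_le (hα : 0 ≤ α) : upperMass α Set.univ 0 ≤ min α 1 := by
  have hF : lowerMass α Set.univ 0 = Real.exp (-α) := by simp [lowerMass, poissonPmf]
  have := lowerMass_univ_add_upperMass_univ hα 0
  have := lowerMass_nonneg Set.univ hα 0
  have := Real.add_one_le_exp (-α)
  exact le_min (by linarith) (by linarith)

lemma upperMass_univ_succ_add_le (hα : 0 < α) (n : ℕ) :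
    upperMass α Set.univ (n + 1) +
      poissonPmf α (n + 1) * (lowerMass α Set.univ n / poissonPmf α n) ≤ min α 1 := by
  have hp := poissonPmf_pos hα n
  have hp' := poissonPmf_pos hα (n + 1)
  have hF := lowerMass_nonneg Set.univ hα.le n
  have hT' := upperMass_nonneg Set.univ hα.le (n + 1)
  refine le_min ?_ ?_
  · have hpF : ((n : ℝ) + 1) * (poissonPmf α (n + 1) * (lowerMass α Set.univ n / poissonPmf α n)) =
        α * lowerMass α Set.univ n := by
      rw [← mul_assoc, succ_mul_poissonPmf_succ]
      field_simp
    have := add_two_mul_upperMass_univ_succ_le hα.le n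
    have := lowerMass_univ_add_upperMass_univ hα.le n
    have := upperMass_nonneg Set.univ hα.le n
    have : 0 ≤ poissonPmf α (n + 1) * (lowerMass α Set.univ n / poissonPmf α n) := by positivity
    nlinarith [(n.cast_nonneg : (0 : ℝ) ≤ n)]
  · have hV := monotone_lowerMass_univ_div hα n.le_succ
    have := lowerMass_univ_add_upperMass_univ hα.le (n + 1)
    have : poissonPmf α (n + 1) * (lowerMass α Set.univ n / poissonPmf α n) ≤
        lowerMass α Set.univ (n + 1) := by
      calc _ ≤ poissonPmf α (n + 1) * (lowerMass α Set.univ (n + 1) / poissonPmf α (n + 1)) :=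
            mul_le_mul_of_nonneg_left hV hp'.le
        _ = _ := by field_simp
    linarith

noncomputable def steinSolution (α : ℝ) (A : Set ℕ) : ℕ → ℝ
  | 0 => 0
  | n + 1 => (A.indicator 1 n - mass α A + n * steinSolution α A n) / α

lemma steinSolution_spec (hα : α ≠ 0) (n : ℕ) :
    α * steinSolution α A (n + 1) - n * steinSolution α A n = A.indicator 1 n - mass α A := by
  rw [steinSolution]
  field_simp
  ring

lemma steinSolution_compl (hα : 0 ≤ α) : steinSolution α Aᶜ = -steinSolution α A := by
  funext n
  induction n with
  | zero => simp [steinSolution]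
  | succ n ih =>
    simp only [steinSolution, Pi.neg_apply, ih, Set.indicator_compl, Pi.sub_apply]
    rw [show mass α Aᶜ = 1 - mass α A by linarith [mass_add_mass_compl A hα], Pi.one_apply]
    ring

lemma steinSolution_succ_eq_div (hα : 0 < α) (n : ℕ) :
    steinSolution α A (n + 1) =
      (lowerMass α A n - mass α A * lowerMass α Set.univ n) / (α * poissonPmf α n) := by
  have hp := poissonPmf_pos hα
  induction n with
  | zero =>
    simp only [steinSolution, lowerMass, zero_add, sum_range_one, Set.indicator_univ,
      indicator_poissonPmf_eq_mul, Pi.one_apply, CharP.cast_eq_zero, zero_mul, add_zero]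
    rw [one_mul, ← sub_mul, mul_div_mul_right _ _ (hp 0).ne']
  | succ n ih =>
    rw [steinSolution, ih, lowerMass_succ, lowerMass_succ, indicator_poissonPmf_eq_mul,
      Set.indicator_univ]
    have := hp n
    have := hp (n + 1)
    field_simp
    push_cast
    linear_combination (lowerMass α A n - mass α A * lowerMass α Set.univ n) *
      succ_mul_poissonPmf_succ α n

lemma steinSolution_succ (hα : 0 < α) (n : ℕ) :
    steinSolution α A (n + 1) =
      (lowerMass α A n * (upperMass α Set.univ n / poissonPmf α n) -
        upperMass α A n * (lowerMass α Set.univ n / poissonPmf α n)) / α := by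
  have hp := (poissonPmf_pos hα n).ne'
  rw [steinSolution_succ_eq_div A hα, ← lowerMass_add_upperMass A hα.le]
  field_simp
  linear_combination (-lowerMass α A n) * lowerMass_univ_add_upperMass_univ hα.le n

lemma abs_steinSolution_le (hα : 0 < α) (n : ℕ) :
    |steinSolution α A n| ≤ upperMass α Set.univ 0 / poissonPmf α 0 / α := by
  have hT := upperMass_nonneg Set.univ hα.le
  have hp := poissonPmf_pos hα
  rcases n with _ | n
  · simpa [steinSolution] using div_nonneg (div_nonneg (hT 0) (hp 0).le) hα.le
  rw [steinSolution_succ A hα, abs_div, abs_of_pos hα, div_le_div_iff_of_pos_right hα]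
  refine le_trans ?_ (antitone_upperMass_univ_div hα n.zero_le)
  set U := upperMass α Set.univ n / poissonPmf α n
  set V := lowerMass α Set.univ n / poissonPmf α n
  have hU : 0 ≤ U := div_nonneg (hT n) (hp n).le
  have hV : 0 ≤ V := div_nonneg (lowerMass_nonneg _ hα.le n) (hp n).le
  have hTV : upperMass α Set.univ n * V = lowerMass α Set.univ n * U := by
    simp only [U, V]
    ring
  have hFT := lowerMass_univ_add_upperMass_univ hα.le n
  have ha := lowerMass_nonneg A hα.le n
  have haF := lowerMass_le_univ A hα.le n
  have hb := upperMass_nonneg A hα.le n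
  have hbT := upperMass_le_univ A hα.le n
  have h1 : lowerMass α A n * U ≤ U := by nlinarith
  have h2 : upperMass α A n * V ≤ U := by nlinarith
  have := mul_nonneg ha hU
  have := mul_nonneg hb hV
  exact abs_le.mpr ⟨by linarith, by linarith⟩

lemma steinSolution_succ_sub_le (hα : 0 < α) (n : ℕ) :
    steinSolution α A (n + 1) - steinSolution α A n ≤ min 1 (1 / α) := by
  suffices α * (steinSolution α A (n + 1) - steinSolution α A n) ≤ min α 1 by
    calc _ ≤ min α 1 / α := (le_div_iff₀' hα).mpr this
      _ = min 1 (1 / α) := by rw [← min_div_div_right hα.le, div_self hα.ne']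
  have hp := poissonPmf_pos hα
  rcases n with _ | m
  · rw [steinSolution_succ A hα, steinSolution, sub_zero, mul_div_cancel₀ _ hα.ne']
    have hT := upperMass_nonneg Set.univ hα.le 0
    have hb := upperMass_nonneg A hα.le 0
    have hV := div_nonneg (lowerMass_nonneg Set.univ hα.le 0) (hp 0).le
    have ha : lowerMass α A 0 ≤ poissonPmf α 0 := by
      simpa [lowerMass] using indicator_poissonPmf_le A hα.le 0
    calc _ ≤ poissonPmf α 0 * (upperMass α Set.univ 0 / poissonPmf α 0) := by
          nlinarith [div_nonneg hT (hp 0).le]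
      _ = upperMass α Set.univ 0 := mul_div_cancel₀ _ (hp 0).ne'
      _ ≤ min α 1 := upperMass_univ_zero_le hα.le
  rw [steinSolution_succ A hα, steinSolution_succ A hα, ← sub_div, mul_div_cancel₀ _ hα.ne',
    lowerMass_succ, upperMass_eq_add_upperMass_succ A hα.le m]
  set U := fun n ↦ upperMass α Set.univ n / poissonPmf α n
  set V := fun n ↦ lowerMass α Set.univ n / poissonPmf α n
  set e := A.indicator (poissonPmf α) (m + 1)
  have hU := antitone_upperMass_univ_div hα m.le_succ
  have hV := monotone_lowerMass_univ_div hα m.le_succ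
  have ha := lowerMass_nonneg A hα.le m
  have hb := upperMass_nonneg A hα.le (m + 1)
  have hUV : 0 ≤ U (m + 1) + V m :=
    add_nonneg (div_nonneg (upperMass_nonneg _ hα.le _) (hp _).le)
      (div_nonneg (lowerMass_nonneg _ hα.le _) (hp _).le)
  calc _ = lowerMass α A m * (U (m + 1) - U m) + upperMass α A (m + 1) * (V m - V (m + 1)) +
        e * (U (m + 1) + V m) := by ring
    _ ≤ e * (U (m + 1) + V m) := by nlinarith
    _ ≤ poissonPmf α (m + 1) * (U (m + 1) + V m) :=
      mul_le_mul_of_nonneg_right (indicator_poissonPmf_le A hα.le _) hUV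
    _ = upperMass α Set.univ (m + 1) + poissonPmf α (m + 1) * V m := by
      simp only [U]
      field_simp [(hp (m + 1)).ne']
    _ ≤ min α 1 := upperMass_univ_succ_add_le hα m

lemma abs_steinSolution_succ_sub_le (hα : 0 < α) (n : ℕ) :
    |steinSolution α A (n + 1) - steinSolution α A n| ≤ min 1 (1 / α) := by
  have hcompl := steinSolution_succ_sub_le Aᶜ hα n
  simp only [steinSolution_compl A hα.le, Pi.neg_apply] at hcompl
  exact abs_le.mpr ⟨by linarith, steinSolution_succ_sub_le A hα n⟩

end PoissonStein

open PoissonStein in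
theorem stein_to_tv_general {Ω : Type*} [MeasureSpace Ω] [IsProbabilityMeasure (ℙ : Measure Ω)]
    (W : Ω → ℕ) (hW : Measurable W) (α : ℝ) (hα : 0 < α)
    (c : ℝ)
    (hstein : ∀ (h : ℕ → ℝ) (C M : ℝ), (∀ i, |h i| ≤ C) → (∀ i, |h (i + 1) - h i| ≤ M) →
      |∫ ω, (α * h (W ω + 1) - (W ω : ℝ) * h (W ω))| ≤ c * M) :
    ∀ A : Set ℕ, |(ℙ {ω | W ω ∈ A}).toReal - ∑' n : ℕ, Set.indicator A (poissonPmf α) n|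
      ≤ c * min 1 (1 / α) := by
  intro A
  have hWA : MeasurableSet (W ⁻¹' A) := hW MeasurableSet.of_discrete
  have hstein_eq : (fun ω ↦ α * steinSolution α A (W ω + 1) - W ω * steinSolution α A (W ω)) =
      fun ω ↦ (W ⁻¹' A).indicator 1 ω - mass α A :=
    funext fun ω ↦ steinSolution_spec A hα.ne' (W ω)
  have hintegral : ∫ ω, (α * steinSolution α A (W ω + 1) - W ω * steinSolution α A (W ω)) =
      (ℙ {ω | W ω ∈ A}).toReal - mass α A := by
    rw [hstein_eq, integral_sub ((integrable_const 1).indicator hWA) (integrable_const _),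
      integral_indicator_one hWA, integral_const, measureReal_def]
    simp [Set.preimage]
  change |_ - mass α A| ≤ _
  rw [← hintegral]
  exact hstein _ _ _ (abs_steinSolution_le A hα) (abs_steinSolution_succ_sub_le A hα)

/-- If `W` is an `ℕ`-valued random variable with mean `α`, and for every bounded
`h : ℕ → ℝ` the Stein functional `E[α h(W+1) - W h(W)]` is bounded by
`c ⋅ sup_i |h(i+1) - h(i)|`, then the law of `W` is within total variation distance
`c ⋅ min(1, 1/α)` of the Poisson(α) distribution. -/
theorem stein_to_tv {Ω : Type*} [MeasureSpace Ω] [IsProbabilityMeasure (ℙ : Measure Ω)]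
    (W : Ω → ℕ) (hW : Measurable W) (α : ℝ) (hα : 0 < α)
    (hmean : ∫ ω, (W ω : ℝ) = α) (c : ℝ) (hc : 0 ≤ c)
    (hstein : ∀ (h : ℕ → ℝ) (C M : ℝ), (∀ i, |h i| ≤ C) → (∀ i, |h (i + 1) - h i| ≤ M) →
      |∫ ω, (α * h (W ω + 1) - (W ω : ℝ) * h (W ω))| ≤ c * M) :
    ∀ A : Set ℕ, |(ℙ {ω | W ω ∈ A}).toReal - ∑' n : ℕ, Set.indicator A (poissonPmf α) n|
      ≤ c * min 1 (1 / α) :=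
  stein_to_tv_general W hW α hα c hstein
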